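/- If E[Y(0) | D*, D] = E[Y(0) | D*] and E[Y(0) | D*] = E[Y(0) | D*_g] (where D*_g is a sub-sigma-algebra/component of D*), and D*_g is conditionally independent of D_{-g} given D_g, then E[Y(0) | D] = E[Y(0) | D_g]. -/

import Mathlib

/-!
Write `Z = E[Y | D*_g]`. By the tower property, (i) and (ii) give `E[Y | D] = E[Z | D]`.
Since `Z` is `D*_g`-measurable, conditional independence of `D*_g` and `D_{-g}` given `D_g`
yields `E[Z | D_g, D_{-g}] = E[Z | D_g]`, the conditional analogue of "conditioning on independent
information does not change the expectation". Conditioning on `D_g` once more identifies the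
right-hand side with `E[Y | D_g]`.
-/

open MeasureTheory ProbabilityTheory

namespace ProbabilityTheory

variable {Ω : Type*} {m' m₁ m₂ mΩ : MeasurableSpace Ω} {μ : Measure Ω}

lemma isPiSystem_image2_inter (m₁ m₂ : MeasurableSpace Ω) :
    IsPiSystem (Set.image2 (· ∩ ·) {s | MeasurableSet[m₁] s} {s | MeasurableSet[m₂] s}) := by
  rintro _ ⟨a₁, ha₁, b₁, hb₁, rfl⟩ _ ⟨a₂, ha₂, b₂, hb₂, rfl⟩ _
  exact ⟨a₁ ∩ a₂, ha₁.inter ha₂, b₁ ∩ b₂, hb₁.inter hb₂, Set.inter_inter_inter_comm _ _ _ _⟩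

lemma sup_eq_generateFrom_image2_inter (m₁ m₂ : MeasurableSpace Ω) :
    m₁ ⊔ m₂ = MeasurableSpace.generateFrom
      (Set.image2 (· ∩ ·) {s | MeasurableSet[m₁] s} {s | MeasurableSet[m₂] s}) := by
  refine le_antisymm (sup_le ?_ ?_) (MeasurableSpace.generateFrom_le ?_)
  · exact fun s hs => MeasurableSpace.measurableSet_generateFrom
      ⟨s, hs, Set.univ, MeasurableSet.univ, Set.inter_univ s⟩
  · exact fun s hs => MeasurableSpace.measurableSet_generateFrom
      ⟨Set.univ, MeasurableSet.univ, s, hs, Set.univ_inter s⟩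
  · rintro _ ⟨a, ha, b, hb, rfl⟩
    exact (le_sup_left (b := m₂) _ ha).inter (le_sup_right (a := m₁) _ hb)

lemma setIntegral_eq_of_forall_setIntegral_inter_eq (hm₁ : m₁ ≤ mΩ) (hm₂ : m₂ ≤ mΩ)
    {f g : Ω → ℝ} (hf : Integrable f μ) (hg : Integrable g μ)
    (h : ∀ a b, MeasurableSet[m₁] a → MeasurableSet[m₂] b →
      ∫ x in a ∩ b, f x ∂μ = ∫ x in a ∩ b, g x ∂μ)
    {s : Set Ω} (hs : MeasurableSet[m₁ ⊔ m₂] s) :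
    ∫ x in s, f x ∂μ = ∫ x in s, g x ∂μ := by
  have hle : m₁ ⊔ m₂ ≤ mΩ := sup_le hm₁ hm₂
  have htot : ∫ x, f x ∂μ = ∫ x, g x ∂μ := by
    simpa using h Set.univ Set.univ MeasurableSet.univ MeasurableSet.univ
  induction s, hs using MeasurableSpace.induction_on_inter
    (sup_eq_generateFrom_image2_inter m₁ m₂) (isPiSystem_image2_inter m₁ m₂) with
  | empty => simp
  | basic t ht =>
    obtain ⟨a, ha, b, hb, rfl⟩ := ht
    exact h a b ha hb
  | compl t ht ih =>
    rw [setIntegral_compl (hle _ ht) hf, setIntegral_compl (hle _ ht) hg, htot, ih]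
  | iUnion t hdisj ht ih =>
    rw [integral_iUnion (fun i => hle _ (ht i)) hdisj hf.integrableOn,
      integral_iUnion (fun i => hle _ (ht i)) hdisj hg.integrableOn]
    exact tsum_congr ih

variable [IsFiniteMeasure μ]

lemma setIntegral_inter_eq_setIntegral_condExp_indicator (hm' : m' ≤ mΩ) {f : Ω → ℝ}
    (hf : Integrable f μ) {a b : Set Ω} (ha : MeasurableSet[m'] a) (hb : MeasurableSet b) :
    ∫ x in a ∩ b, f x ∂μ = ∫ x in a, (μ[b.indicator f | m']) x ∂μ := by
  rw [setIntegral_condExp hm' (hf.indicator hb) ha, setIntegral_indicator hb]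

/-- Both sides have the same integral over every `a ∩ b` with `a ∈ m'`, `b ∈ m₂`, and these sets
form a π-system generating `m' ⊔ m₂`. -/
lemma condExp_sup_ae_eq_of_condExp_indicator_ae_eq_mul (hm' : m' ≤ mΩ) (hm₂ : m₂ ≤ mΩ)
    {f : Ω → ℝ} (hf : Integrable f μ)
    (h : ∀ b, MeasurableSet[m₂] b → μ[b.indicator f | m'] =ᵐ[μ] μ⟦b | m'⟧ * μ[f | m']) :
    μ[f | m' ⊔ m₂] =ᵐ[μ] μ[f | m'] := by
  refine (ae_eq_condExp_of_forall_setIntegral_eq (sup_le hm' hm₂) hf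
    (fun _ _ _ => integrable_condExp.integrableOn)
    (fun s hs _ => setIntegral_eq_of_forall_setIntegral_inter_eq hm' hm₂ integrable_condExp hf
      (fun a b ha hb => ?_) hs)
    (stronglyMeasurable_condExp.mono (le_sup_left : m' ≤ m' ⊔ m₂)).aestronglyMeasurable).symm
  have hbΩ : MeasurableSet b := hm₂ _ hb
  have h_pull : μ[b.indicator (μ[f | m']) | m'] =ᵐ[μ] μ⟦b | m'⟧ * μ[f | m'] := by
    have h_ind : b.indicator (μ[f | m']) = b.indicator (fun _ => (1 : ℝ)) * μ[f | m'] := by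
      ext x; by_cases hx : x ∈ b <;> simp [hx]
    rw [h_ind]
    exact condExp_mul_of_stronglyMeasurable_right stronglyMeasurable_condExp
      (h_ind ▸ integrable_condExp.indicator hbΩ) ((integrable_const 1).indicator hbΩ)
  rw [setIntegral_inter_eq_setIntegral_condExp_indicator hm' integrable_condExp ha hbΩ,
    setIntegral_inter_eq_setIntegral_condExp_indicator hm' hf ha hbΩ]
  exact setIntegral_congr_ae (hm' _ ha) ((h_pull.trans (h b hb).symm).mono fun _ hx _ => hx)

variable [StandardBorelSpace Ω]

lemma CondIndep.condExp_indicator_sup_ae_eq (hm' : m' ≤ mΩ) (hm₁ : m₁ ≤ mΩ) (hm₂ : m₂ ≤ mΩ)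
    (h : CondIndep m' m₁ m₂ hm' μ) {b : Set Ω} (hb : MeasurableSet[m₂] b) :
    μ⟦b | m' ⊔ m₁⟧ =ᵐ[μ] μ⟦b | m'⟧ := by
  refine condExp_sup_ae_eq_of_condExp_indicator_ae_eq_mul hm' hm₁
    ((integrable_const 1).indicator (hm₂ _ hb)) fun t ht => ?_
  rw [Set.indicator_indicator]
  exact (condIndep_iff m' m₁ m₂ hm' hm₁ hm₂ μ).mp h t b ht hb

lemma CondIndep.condExp_indicator_ae_eq_mul (hm' : m' ≤ mΩ) (hm₁ : m₁ ≤ mΩ) (hm₂ : m₂ ≤ mΩ)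
    (h : CondIndep m' m₁ m₂ hm' μ) {f : Ω → ℝ} (hf : Integrable f μ)
    (hf₁ : StronglyMeasurable[m₁] f) {b : Set Ω} (hb : MeasurableSet[m₂] b) :
    μ[b.indicator f | m'] =ᵐ[μ] μ⟦b | m'⟧ * μ[f | m'] := by
  have hbΩ : MeasurableSet b := hm₂ _ hb
  have h_ind : b.indicator f = f * b.indicator (fun _ => (1 : ℝ)) := by
    ext x; by_cases hx : x ∈ b <;> simp [hx]
  have h_sup : μ[b.indicator f | m' ⊔ m₁] =ᵐ[μ] μ⟦b | m'⟧ * f := by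
    rw [h_ind]
    refine (condExp_mul_of_stronglyMeasurable_left (hf₁.mono (le_sup_right : m₁ ≤ m' ⊔ m₁))
      (h_ind ▸ hf.indicator hbΩ) ((integrable_const 1).indicator hbΩ)).trans ?_
    filter_upwards [h.condExp_indicator_sup_ae_eq hm' hm₁ hm₂ hb] with x hx
    simp only [Pi.mul_apply, hx, mul_comm]
  calc μ[b.indicator f | m']
      =ᵐ[μ] μ[μ[b.indicator f | m' ⊔ m₁] | m'] :=
        (condExp_condExp_of_le le_sup_left (sup_le hm' hm₁)).symm
    _ =ᵐ[μ] μ[μ⟦b | m'⟧ * f | m'] := condExp_congr_ae h_sup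
    _ =ᵐ[μ] μ⟦b | m'⟧ * μ[f | m'] :=
        condExp_mul_of_stronglyMeasurable_left stronglyMeasurable_condExp
          (integrable_condExp.congr h_sup) hf

lemma CondIndep.condExp_sup_right_ae_eq (hm' : m' ≤ mΩ) (hm₁ : m₁ ≤ mΩ) (hm₂ : m₂ ≤ mΩ)
    (h : CondIndep m' m₁ m₂ hm' μ) {f : Ω → ℝ} (hf : Integrable f μ)
    (hf₁ : StronglyMeasurable[m₁] f) :
    μ[f | m' ⊔ m₂] =ᵐ[μ] μ[f | m'] :=
  condExp_sup_ae_eq_of_condExp_indicator_ae_eq_mul hm' hm₂ hf fun _ hb =>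
    h.condExp_indicator_ae_eq_mul hm' hm₁ hm₂ hf hf₁ hb

end ProbabilityTheory

theorem mean_independence_observed_status_general
    {Ω : Type*} {mΩ : MeasurableSpace Ω} [StandardBorelSpace Ω]
    (μ : Measure Ω) [IsProbabilityMeasure μ]
    (Y : Ω → ℝ)
    (mDstar mDstarG mDg mDminusG : MeasurableSpace Ω)
    (hDstar : mDstar ≤ mΩ) (hDstarG : mDstarG ≤ mDstar)
    (hDg : mDg ≤ mΩ) (hDminusG : mDminusG ≤ mΩ)
    -- (i) nondifferential misclassification: E[Y(0) | D*, D] = E[Y(0) | D*]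
    (h_nondiff : μ[Y | mDstar ⊔ (mDg ⊔ mDminusG)] =ᵐ[μ] μ[Y | mDstar])
    -- (ii) mean independence with respect to the true status: E[Y(0) | D*] = E[Y(0) | D*_g]
    (h_meanind : μ[Y | mDstar] =ᵐ[μ] μ[Y | mDstarG])
    -- (iii) conditional independence: D*_g ⟂ D_{-g} | D_g
    (h_condind : CondIndep mDg mDstarG mDminusG hDg μ) :
    μ[Y | mDg ⊔ mDminusG] =ᵐ[μ] μ[Y | mDg] := by
  have hD : mDg ⊔ mDminusG ≤ mΩ := sup_le hDg hDminusG
  have hY_obs : μ[Y | mDg ⊔ mDminusG] =ᵐ[μ] μ[μ[Y | mDstarG] | mDg] :=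
    calc μ[Y | mDg ⊔ mDminusG]
        =ᵐ[μ] μ[μ[Y | mDstar ⊔ (mDg ⊔ mDminusG)] | mDg ⊔ mDminusG] :=
          (condExp_condExp_of_le le_sup_right (sup_le hDstar hD)).symm
      _ =ᵐ[μ] μ[μ[Y | mDstarG] | mDg ⊔ mDminusG] := condExp_congr_ae (h_nondiff.trans h_meanind)
      _ =ᵐ[μ] μ[μ[Y | mDstarG] | mDg] :=
          h_condind.condExp_sup_right_ae_eq hDg (hDstarG.trans hDstar) hDminusG
            integrable_condExp stronglyMeasurable_condExp
  calc μ[Y | mDg ⊔ mDminusG]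
      =ᵐ[μ] μ[μ[Y | mDstarG] | mDg] := hY_obs
    _ =ᵐ[μ] μ[μ[μ[Y | mDstarG] | mDg] | mDg] := (condExp_condExp_of_le le_rfl hDg).symm
    _ =ᵐ[μ] μ[μ[Y | mDg ⊔ mDminusG] | mDg] := condExp_congr_ae hY_obs.symm
    _ =ᵐ[μ] μ[Y | mDg] := condExp_condExp_of_le le_sup_left hD

/-- If `E[Y(0) | D*, D] = E[Y(0) | D*]` (nondifferential misclassification),
`E[Y(0) | D*] = E[Y(0) | D*_g]` (mean independence w.r.t. true status), and `D*_g` is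
conditionally independent of `D_{-g}` given `D_g`, then `E[Y(0) | D] = E[Y(0) | D_g]`.
Here the information sets are modeled as sub-σ-algebras: `mDstar` (generated by the true
statuses `D*`), `mDstarG ≤ mDstar` (generated by `D*_g`), `mDg` and `mDminusG` (generated by
the observed `D_g` and `D_{-g}` respectively), with `mD = mDg ⊔ mDminusG` the observed
information. -/
theorem mean_independence_observed_status
    {Ω : Type*} {mΩ : MeasurableSpace Ω} [StandardBorelSpace Ω]
    (μ : Measure Ω) [IsProbabilityMeasure μ]
    (Y : Ω → ℝ) (hY : Integrable Y μ)
    (mDstar mDstarG mDg mDminusG : MeasurableSpace Ω)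
    (hDstar : mDstar ≤ mΩ) (hDstarG : mDstarG ≤ mDstar)
    (hDg : mDg ≤ mΩ) (hDminusG : mDminusG ≤ mΩ)
    -- (i) nondifferential misclassification: E[Y(0) | D*, D] = E[Y(0) | D*]
    (h_nondiff : μ[Y | mDstar ⊔ (mDg ⊔ mDminusG)] =ᵐ[μ] μ[Y | mDstar])
    -- (ii) mean independence with respect to the true status: E[Y(0) | D*] = E[Y(0) | D*_g]
    (h_meanind : μ[Y | mDstar] =ᵐ[μ] μ[Y | mDstarG])
    -- (iii) conditional independence: D*_g ⟂ D_{-g} | D_g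
    (h_condind : CondIndep mDg mDstarG mDminusG hDg μ) :
    μ[Y | mDg ⊔ mDminusG] =ᵐ[μ] μ[Y | mDg] :=
  mean_independence_observed_status_general μ Y mDstar mDstarG mDg mDminusG hDstar hDstarG hDg
    hDminusG h_nondiff h_meanind h_condind
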